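/- arXiv:1805.04227 — 2 statements merged into one kernel-verified Lean document; each statement's English description precedes it below -/
import Mathlib

section
/- Let S and I be finite sets, let w be a probability distribution on I, and for each i ∈ I let μ_i and ν_i be probability measures on S with ν_i(x) > 0 for every x ∈ S. Define the mixtures μ = Σ_{i∈I} w(i) μ_i and ν = Σ_{i∈I} w(i) ν_i. Then ‖μ − ν‖²_{L²(ν)} ≤ Σ_{i∈I} w(i) · ‖μ_i − ν_i‖²_{L²(ν_i)}. -/
open Finset Filter MeasureTheory

noncomputable section

open scoped Classical

variable {V : Type} [Fintype V] [DecidableEq V]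

/-- The finset of monochromatic edges of the configuration `σ`. -/
def monoEdges (G : SimpleGraph V) {q : ℕ} (σ : V → Fin q) : Finset (Sym2 V) :=
  G.edgeFinset.filter fun e => ∀ u ∈ e, ∀ v ∈ e, σ u = σ v

/-- The number of connected components of the graph `(V, ω)` (isolated vertices count
as components). -/
def numComp (ω : Finset (Sym2 V)) : ℕ :=
  Nat.card (SimpleGraph.fromEdgeSet (↑ω : Set (Sym2 V))).ConnectedComponent

/-- `τ` is constant on every connected component of the graph `(V, ω)`. -/
def constOnComp {q : ℕ} (ω : Finset (Sym2 V)) (τ : V → Fin q) : Prop :=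
  ∀ u v : V, (SimpleGraph.fromEdgeSet (↑ω : Set (Sym2 V))).Reachable u v → τ u = τ v

/-- Transition matrix of the Swendsen–Wang dynamics for the `q`-state Potts model,
with percolation parameter `p = 1 - exp (-β)`. -/
def swMatrix (G : SimpleGraph V) (q : ℕ) (p : ℝ) :
    Matrix (V → Fin q) (V → Fin q) ℝ :=
  Matrix.of fun σ τ =>
    ∑ ω ∈ (monoEdges G σ).powerset,
      p ^ ω.card * (1 - p) ^ ((monoEdges G σ).card - ω.card) * ((q : ℝ) ^ numComp ω)⁻¹ *
        (if constOnComp ω τ then 1 else 0)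

/-- The `q`-state Potts measure at inverse temperature `β` where `p = 1 - exp (-β)`,
so that `exp (β * k) = ((1 - p) ^ k)⁻¹`. -/
def pottsPi (G : SimpleGraph V) (q : ℕ) (p : ℝ) : (V → Fin q) → ℝ := fun σ =>
  ((1 - p) ^ (monoEdges G σ).card)⁻¹ /
    ∑ τ : V → Fin q, ((1 - p) ^ (monoEdges G τ).card)⁻¹

/-- Total-variation distance between two (probability) vectors. -/
def tvDist {S : Type} [Fintype S] (μ ν : S → ℝ) : ℝ := (∑ x, |μ x - ν x|) / 2

/-- `L²(ν)` distance between two (probability) vectors. -/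
def l2Dist {S : Type} [Fintype S] (μ ν : S → ℝ) : ℝ :=
  Real.sqrt (∑ x, (μ x / ν x - 1) ^ 2 * ν x)

/-- Worst-case total-variation distance from stationarity at time `t`. -/
def swTV (G : SimpleGraph V) (q : ℕ) (p : ℝ) (t : ℕ) : ℝ :=
  ⨆ x₀ : V → Fin q, tvDist (fun y => (swMatrix G q p ^ t) x₀ y) (pottsPi G q p)

/-- Worst-case `L²(π)` distance from stationarity at time `t`. -/
def swL2 (G : SimpleGraph V) (q : ℕ) (p : ℝ) (t : ℕ) : ℝ :=
  ⨆ x₀ : V → Fin q, l2Dist (fun y => (swMatrix G q p ^ t) x₀ y) (pottsPi G q p)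

/-- Mixing time of the Swendsen–Wang dynamics. -/
def swMix (G : SimpleGraph V) (q : ℕ) (p : ℝ) (ε : ℝ) : ℕ :=
  sInf {t : ℕ | swTV G q p t ≤ ε}

/-- Spectral gap of the (reversible) Swendsen–Wang dynamics: `1` minus the largest
absolute value of an eigenvalue on the space of `π`-mean-zero functions. -/
def swGap (G : SimpleGraph V) (q : ℕ) (p : ℝ) : ℝ :=
  1 - sSup {x : ℝ | ∃ lam : ℝ, x = |lam| ∧ ∃ f : (V → Fin q) → ℝ, f ≠ 0 ∧
      (∑ σ, pottsPi G q p σ * f σ) = 0 ∧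
      ∀ σ, (∑ τ, swMatrix G q p σ τ * f τ) = lam * f σ}

/-- The `d`-dimensional discrete torus of side length `n` (nearest-neighbour graph with
periodic boundary conditions). -/
def torus (d n : ℕ) : SimpleGraph (Fin d → ZMod n) where
  Adj x y := x ≠ y ∧ ∃ i, (x i = y i + 1 ∨ y i = x i + 1) ∧ ∀ j, j ≠ i → x j = y j
  symm := ⟨by
    rintro x y ⟨hxy, i, h1, h2⟩
    exact ⟨hxy.symm, i, h1.symm, fun j hj => (h2 j hj).symm⟩⟩
  loopless := ⟨fun x h => h.1 rfl⟩

/-- Spectral gap of the Swendsen–Wang dynamics on the torus `ℤ_n^d` (junk value for `n = 0`). -/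
def torusGap (d q : ℕ) (p : ℝ) (n : ℕ) : ℝ :=
  if h : n = 0 then 0 else
    letI : NeZero n := ⟨h⟩
    swGap (torus d n) q p

/-- Worst-case TV distance from stationarity of SW dynamics on `ℤ_n^d` at time `t`. -/
def torusTV (d q : ℕ) (p : ℝ) (n t : ℕ) : ℝ :=
  if h : n = 0 then 0 else
    letI : NeZero n := ⟨h⟩
    swTV (torus d n) q p t

/-- Mixing time of the SW dynamics on `ℤ_n^d`. -/
def torusMix (d q : ℕ) (p : ℝ) (n : ℕ) (ε : ℝ) : ℕ :=
  if h : n = 0 then 0 else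
    letI : NeZero n := ⟨h⟩
    swMix (torus d n) q p ε

/-- `γ⋆(r) = log (1 / (1 - γ(r)))` where `γ(r)` is the gap on `ℤ_r^d`. -/
def gammaStarAt (d q : ℕ) (p : ℝ) (r : ℕ) : ℝ :=
  Real.log (1 / (1 - torusGap d q p r))

/-- Marginal (push-forward) of a measure along a map `f`. -/
def marginal {S T : Type} [Fintype S] (μ : S → ℝ) (f : S → T) : T → ℝ :=
  fun y => ∑ x ∈ Finset.univ.filter (fun x => f x = y), μ x

/-- The subcube of side length `m` inside the torus of side length `r`. -/
def cube (d r m : ℕ) : Set (Fin d → ZMod r) := {x | ∀ i, (x i).val < m}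

/-- Worst-case `L²` distance from stationarity of the marginal on the subcube of side
length `m` of the SW dynamics on `ℤ_r^d` at time `t`. -/
def projL2 (d q r m : ℕ) (p : ℝ) (t : ℕ) : ℝ :=
  if h : r = 0 then 0 else
    letI : NeZero r := ⟨h⟩
    ⨆ x₀ : (Fin d → ZMod r) → Fin q,
      l2Dist
        (marginal (fun y => (swMatrix (torus d r) q p ^ t) x₀ y)
          (fun σ (v : ↥(cube d r m)) => σ v.1))
        (marginal (pottsPi (torus d r) q p) (fun σ (v : ↥(cube d r m)) => σ v.1))

/-- Worst-case TV distance from stationarity of the marginal on the subcube of side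
length `m` of the SW dynamics on `ℤ_r^d` at time `t`. -/
def projTV (d q r m : ℕ) (p : ℝ) (t : ℕ) : ℝ :=
  if h : r = 0 then 0 else
    letI : NeZero r := ⟨h⟩
    ⨆ x₀ : (Fin d → ZMod r) → Fin q,
      tvDist
        (marginal (fun y => (swMatrix (torus d r) q p ^ t) x₀ y)
          (fun σ (v : ↥(cube d r m)) => σ v.1))
        (marginal (pottsPi (torus d r) q p) (fun σ (v : ↥(cube d r m)) => σ v.1))

/-- The quantity `m_t` of the paper: `r = 3 log⁵ n` and `Λ` a subcube of side `2 log⁵ n`. -/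
def mOf (d q : ℕ) (p : ℝ) (n t : ℕ) : ℝ :=
  projL2 d q ⌊3 * Real.log n ^ 5⌋₊ ⌊2 * Real.log n ^ 5⌋₊ p t

/-- The quantity `m_t*` of the paper: the TV analogue of `m_t`. -/
def mStarOf (d q : ℕ) (p : ℝ) (n t : ℕ) : ℝ :=
  projTV d q ⌊3 * Real.log n ^ 5⌋₊ ⌊2 * Real.log n ^ 5⌋₊ p t

/-- `γ⋆(r)` with `r = 3 log⁵ n`. -/
def gammaStarN (d q : ℕ) (p : ℝ) (n : ℕ) : ℝ :=
  gammaStarAt d q p ⌊3 * Real.log n ^ 5⌋₊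


/-! Writing the squared distance as `∑ x, (μ x - ν x) ^ 2 / ν x`, the claim holds pointwise in `x`:
with `d i = μ i x - ν i x`, Cauchy–Schwarz gives
`(∑ w i * d i) ^ 2 ≤ (∑ w i * ν i x) * ∑ w i * d i ^ 2 / ν i x`. -/

theorem Finset.sq_sum_mul_div_sum_mul_le {ι R : Type*} [Field R] [LinearOrder R]
    [IsStrictOrderedRing R] (s : Finset ι) (w d b : ι → R) (hw : ∀ i ∈ s, 0 ≤ w i)
    (hb : ∀ i ∈ s, 0 < b i) :
    (∑ i ∈ s, w i * d i) ^ 2 / ∑ i ∈ s, w i * b i ≤ ∑ i ∈ s, w i * (d i ^ 2 / b i) := by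
  have hwb : ∀ i ∈ s, 0 ≤ w i * b i := fun i hi => mul_nonneg (hw i hi) (hb i hi).le
  have hwdb : ∀ i ∈ s, 0 ≤ w i * (d i ^ 2 / b i) := fun i hi =>
    mul_nonneg (hw i hi) (div_nonneg (sq_nonneg _) (hb i hi).le)
  refine div_le_of_le_mul₀ (sum_nonneg hwb) (sum_nonneg hwdb)
    (sum_sq_le_sum_mul_sum_of_sq_le_mul s hwdb hwb fun i hi => le_of_eq ?_)
  field_simp [(hb i hi).ne']

theorem div_sub_one_sq_mul {K : Type*} [Field K] (a b : K) :
    (a / b - 1) ^ 2 * b = (a - b) ^ 2 / b := by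
  rcases eq_or_ne b 0 with rfl | hb
  · simp
  · field_simp

theorem l2Dist_sq_eq_sum {S : Type} [Fintype S] (μ ν : S → ℝ) (hν : ∀ x, 0 ≤ ν x) :
    l2Dist μ ν ^ 2 = ∑ x, (μ x - ν x) ^ 2 / ν x := by
  rw [l2Dist, Real.sq_sqrt (sum_nonneg fun x _ => mul_nonneg (sq_nonneg _) (hν x))]
  simp only [div_sub_one_sq_mul]

theorem l2_mixture_general {S I : Type} [Fintype S] [Fintype I]
    (w : I → ℝ) (hw0 : ∀ i, 0 ≤ w i)
    (μ ν : I → S → ℝ)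
    (hν : ∀ i, (∀ x, 0 < ν i x) ∧ ∑ x, ν i x = 1) :
    l2Dist (fun x => ∑ i, w i * μ i x) (fun x => ∑ i, w i * ν i x) ^ 2
      ≤ ∑ i, w i * l2Dist (μ i) (ν i) ^ 2 := by
  have hνpos : ∀ i x, 0 < ν i x := fun i => (hν i).1
  rw [l2Dist_sq_eq_sum _ _ fun x => sum_nonneg fun i _ => mul_nonneg (hw0 i) (hνpos i x).le]
  simp only [fun i => l2Dist_sq_eq_sum (μ i) (ν i) fun x => (hνpos i x).le, mul_sum]
  rw [sum_comm]
  refine sum_le_sum fun x _ => ?_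
  simpa only [← sum_sub_distrib, ← mul_sub] using
    sq_sum_mul_div_sum_mul_le univ w (fun i => μ i x - ν i x) (fun i => ν i x)
      (fun i _ => hw0 i) fun i _ => hνpos i x

/-- Jensen-type inequality for mixtures: the squared `L²(ν)` distance of mixtures is at
most the average of the squared `L²(ν_i)` distances. -/
theorem l2_mixture {S I : Type} [Fintype S] [Fintype I]
    (w : I → ℝ) (hw0 : ∀ i, 0 ≤ w i) (hw1 : ∑ i, w i = 1)
    (μ ν : I → S → ℝ)
    (hμ : ∀ i, (∀ x, 0 ≤ μ i x) ∧ ∑ x, μ i x = 1)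
    (hν : ∀ i, (∀ x, 0 < ν i x) ∧ ∑ x, ν i x = 1) :
    l2Dist (fun x => ∑ i, w i * μ i x) (fun x => ∑ i, w i * ν i x) ^ 2
      ≤ ∑ i, w i * l2Dist (μ i) (ν i) ^ 2 :=
  l2_mixture_general w hw0 μ ν hν

end
end

section
/- Let V be a finite set, q ≥ 2 an integer, and Ω = {1,…,q}^V. Let η be a probability distribution on the subsets of V, and for each R ⊆ V let φ_R be a probability measure on {1,…,q}^R. Let μ be the probability measure on Ω obtained by sampling R ⊆ V according to η, sampling the coordinates in R according to φ_R, and independently sampling each coordinate in V∖R uniformly at random from {1,…,q}; explicitly μ(x) = Σ_{R⊆V} η(R) φ_R(x|_R) q^{−|V∖R|}. Let ν be the uniform measure on Ω. Then ‖μ − ν‖²_{L²(ν)} ≤ E[q^{|R∩R'|}] − 1, where R and R' are independent random subsets of V each with law η. -/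
open Finset Filter MeasureTheory

noncomputable section

open scoped Classical

variable {V : Type} [Fintype V] [DecidableEq V]

/-! Write `μ = ∑_R η(R) μ_R`, where `μ_R` samples the coordinates in `R` from `φ_R` and the
others uniformly. Then `‖μ - ν‖² = q^|V| ∑_x μ(x)² - 1 = ∑_{R,R'} η(R) η(R') q^|V| ⟨μ_R, μ_R'⟩ - 1`.
The product `φ_R(x|_R) φ_R'(x|_R')` depends only on `x|_{R ∪ R'}`, and a configuration on
`R ∪ R'` is determined by its restrictions to `R` and `R'`, so summing the product over `x`
gives at most `q^|(R ∪ R')ᶜ|`. Counting exponents,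
`|V| + |(R ∪ R')ᶜ| - |Rᶜ| - |R'ᶜ| = |R ∩ R'|`, hence `q^|V| ⟨μ_R, μ_R'⟩ ≤ q^|R ∩ R'|`. -/

section UniformExtension

variable {α : Type*} [Fintype α]

theorem sum_comp_restrict {M : Type*} [AddCommMonoid M] (R : Finset V) (G : (R → α) → M) :
    ∑ x : V → α, G (R.restrict x) = (Fintype.card α ^ Rᶜ.card) • ∑ y, G y := by
  rw [← (Equiv.piEquivPiSubtypeProd (· ∈ R) fun _ => α).symm.sum_comp, Fintype.sum_prod_type]
  have hcard : Fintype.card ({v // v ∉ R} → α) = Fintype.card α ^ Rᶜ.card := by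
    simp only [Fintype.card_fun, Fintype.card_subtype_compl, Finset.card_compl, Fintype.card_coe]
  have hG : ∀ p : ({v // v ∈ R} → α) × ({v // v ∉ R} → α), G (R.restrict
      ((Equiv.piEquivPiSubtypeProd (· ∈ R) fun _ => α).symm p)) = G p.1 := fun p => by
    congr 1; funext v; simp [v.2]
  simp only [hG, Finset.sum_const, Finset.card_univ, hcard]
  exact Finset.smul_sum.symm

theorem sum_restrict_mul_restrict_le (R R' : Finset V) {f : (R → α) → ℝ} {g : (R' → α) → ℝ}
    (hf0 : ∀ y, 0 ≤ f y) (hg0 : ∀ y, 0 ≤ g y) (hf1 : ∑ y, f y = 1) (hg1 : ∑ y, g y = 1) :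
    ∑ x : V → α, f (R.restrict x) * g (R'.restrict x) ≤ Fintype.card α ^ (R ∪ R')ᶜ.card := by
  set m : (↥(R ∪ R') → α) → (R → α) × (R' → α) := fun z =>
    (Finset.restrict₂ (π := fun _ => α) Finset.subset_union_left z,
      Finset.restrict₂ (π := fun _ => α) Finset.subset_union_right z)
  have hm : Function.Injective m := by
    intro z z' h
    funext ⟨v, hv⟩
    rcases Finset.mem_union.1 hv with hvR | hvR'
    · exact congrFun (congrArg Prod.fst h) ⟨v, hvR⟩
    · exact congrFun (congrArg Prod.snd h) ⟨v, hvR'⟩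
  have hsum : ∑ z, f (m z).1 * g (m z).2 ≤ 1 :=
    calc ∑ z, f (m z).1 * g (m z).2 = ∑ p ∈ Finset.univ.image m, f p.1 * g p.2 := by
          rw [Finset.sum_image fun z _ z' _ h => hm h]
      _ ≤ ∑ p : (R → α) × (R' → α), f p.1 * g p.2 :=
          Finset.sum_le_univ_sum_of_nonneg fun p => mul_nonneg (hf0 _) (hg0 _)
      _ = 1 := by rw [Fintype.sum_prod_type, ← Finset.sum_mul_sum, hf1, hg1, one_mul]
  calc ∑ x : V → α, f (R.restrict x) * g (R'.restrict x)
      = Fintype.card α ^ (R ∪ R')ᶜ.card * ∑ z, f (m z).1 * g (m z).2 := by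
        have := sum_comp_restrict (R ∪ R') fun z => f (m z).1 * g (m z).2
        rwa [nsmul_eq_mul, Nat.cast_pow] at this
    _ ≤ Fintype.card α ^ (R ∪ R')ᶜ.card := by
        exact mul_le_of_le_one_right (by positivity) hsum

def extendUniform (R : Finset V) (f : (R → α) → ℝ) (x : V → α) : ℝ :=
  f (R.restrict x) / (Fintype.card α : ℝ) ^ Rᶜ.card

variable [Nonempty α]

theorem sum_extendUniform (R : Finset V) {f : (R → α) → ℝ} (hf1 : ∑ y, f y = 1) :
    ∑ x, extendUniform R f x = 1 := by
  simp only [extendUniform, ← Finset.sum_div]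
  rw [sum_comp_restrict R f, hf1, nsmul_eq_mul, mul_one, Nat.cast_pow, div_self (by positivity)]

theorem card_compl_union_add_card_eq (R R' : Finset V) :
    (R ∪ R')ᶜ.card + Fintype.card V = Rᶜ.card + R'ᶜ.card + (R ∩ R').card := by
  have := Finset.card_inter_add_card_union R R'
  rw [Finset.card_compl, Finset.card_compl, Finset.card_compl]
  have := Finset.card_le_univ (R ∪ R')
  have := Finset.card_le_univ R
  have := Finset.card_le_univ R'
  omega

theorem card_pow_mul_sum_extendUniform_mul_le (R R' : Finset V) {f : (R → α) → ℝ}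
    {g : (R' → α) → ℝ} (hf0 : ∀ y, 0 ≤ f y) (hg0 : ∀ y, 0 ≤ g y) (hf1 : ∑ y, f y = 1)
    (hg1 : ∑ y, g y = 1) :
    (Fintype.card α : ℝ) ^ Fintype.card V * ∑ x, extendUniform R f x * extendUniform R' g x
      ≤ (Fintype.card α : ℝ) ^ (R ∩ R').card := by
  set c := (Fintype.card α : ℝ)
  have hpow : c ^ Fintype.card V * c ^ (R ∪ R')ᶜ.card / (c ^ Rᶜ.card * c ^ R'ᶜ.card)
      = c ^ (R ∩ R').card := by
    rw [div_eq_iff (by positivity), ← pow_add, ← pow_add, ← pow_add, add_comm,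
      card_compl_union_add_card_eq]
    ring
  calc c ^ Fintype.card V * ∑ x, extendUniform R f x * extendUniform R' g x
      = c ^ Fintype.card V * (∑ x : V → α, f (R.restrict x) * g (R'.restrict x))
          / (c ^ Rᶜ.card * c ^ R'ᶜ.card) := by
        simp only [extendUniform, div_mul_div_comm]
        rw [← Finset.sum_div, mul_div_assoc]
    _ ≤ c ^ Fintype.card V * c ^ (R ∪ R')ᶜ.card / (c ^ Rᶜ.card * c ^ R'ᶜ.card) := by
        gcongr
        exact sum_restrict_mul_restrict_le R R' hf0 hg0 hf1 hg1
    _ = c ^ (R ∩ R').card := hpow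

end UniformExtension

theorem l2Dist_sq_eq {S : Type} [Fintype S] {μ ν : S → ℝ} (hν : ∀ x, 0 < ν x)
    (hμ1 : ∑ x, μ x = 1) (hν1 : ∑ x, ν x = 1) :
    l2Dist μ ν ^ 2 = ∑ x, μ x ^ 2 / ν x - 1 := by
  have hexpand : ∀ x, (μ x / ν x - 1) ^ 2 * ν x = μ x ^ 2 / ν x - 2 * μ x + ν x := fun x => by
    field_simp [(hν x).ne']
    ring
  rw [l2Dist, Real.sq_sqrt (Finset.sum_nonneg fun x _ => mul_nonneg (sq_nonneg _) (hν x).le)]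
  simp only [hexpand, Finset.sum_add_distrib, Finset.sum_sub_distrib, ← Finset.mul_sum, hμ1, hν1]
  ring

theorem sum_sq_sum_mul_eq {S ι : Type*} [Fintype S] [Fintype ι] (w : ι → ℝ) (p : ι → S → ℝ) :
    ∑ x, (∑ i, w i * p i x) ^ 2 = ∑ i, ∑ j, w i * w j * ∑ x, p i x * p j x := by
  simp_rw [sq, Finset.sum_mul_sum, Finset.mul_sum]
  rw [Finset.sum_comm]
  refine Finset.sum_congr rfl fun i _ => ?_
  rw [Finset.sum_comm]
  exact Finset.sum_congr rfl fun j _ => Finset.sum_congr rfl fun x _ => by ring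

/-- The Miller–Peres lemma: if `μ` is obtained by sampling `R ⊆ V` via `η`, colouring
`R` via `φ_R` and colouring `V∖R` uniformly, and `ν` is uniform on `{1,…,q}^V`, then
`‖μ - ν‖²_{L²(ν)} ≤ E[q^{|R ∩ R'|}] - 1` for `R, R'` i.i.d. with law `η`. -/
theorem miller_peres {V : Type} [Fintype V] [DecidableEq V] (q : ℕ) (hq : 2 ≤ q)
    (η : Finset V → ℝ) (hη0 : ∀ R, 0 ≤ η R) (hη1 : ∑ R : Finset V, η R = 1)
    (φ : ∀ R : Finset V, ({v // v ∈ R} → Fin q) → ℝ)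
    (hφ : ∀ R : Finset V, (∀ y, 0 ≤ φ R y) ∧ ∑ y, φ R y = 1) :
    l2Dist
        (fun x : V → Fin q =>
          ∑ R : Finset V, η R * φ R (fun v => x v.1) * ((q : ℝ) ^ Rᶜ.card)⁻¹)
        (fun _ : V → Fin q => ((q : ℝ) ^ Fintype.card V)⁻¹) ^ 2
      ≤ (∑ R : Finset V, ∑ R' : Finset V, η R * η R' * (q : ℝ) ^ (R ∩ R').card) - 1 := by
  have : Nonempty (Fin q) := ⟨⟨0, by omega⟩⟩
  have hq0 : (0 : ℝ) < q := by exact_mod_cast (by omega : 0 < q)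
  set p := fun R => extendUniform R (φ R)
  have hμ : (fun x : V → Fin q =>
      ∑ R : Finset V, η R * φ R (fun v => x v.1) * ((q : ℝ) ^ Rᶜ.card)⁻¹)
        = fun x => ∑ R, η R * p R x := by
    simp only [p, extendUniform, Fintype.card_fin, div_eq_mul_inv, mul_assoc]
    rfl
  have hμ1 : ∑ x, ∑ R, η R * p R x = 1 := by
    rw [Finset.sum_comm]
    simp only [← Finset.mul_sum, p, sum_extendUniform _ (hφ _).2, mul_one, hη1]
  have hν : ∀ x : V → Fin q, 0 < ((q : ℝ) ^ Fintype.card V)⁻¹ := fun _ => by positivity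
  have hν1 : ∑ _x : V → Fin q, ((q : ℝ) ^ Fintype.card V)⁻¹ = 1 := by
    simp [Finset.card_univ, hq0.ne']
  rw [hμ, l2Dist_sq_eq hν hμ1 hν1, sub_le_sub_iff_right]
  calc ∑ x, (∑ R, η R * p R x) ^ 2 / ((q : ℝ) ^ Fintype.card V)⁻¹
      = ∑ R, ∑ R', η R * η R' * ((q : ℝ) ^ Fintype.card V * ∑ x, p R x * p R' x) := by
        rw [← Finset.sum_div, sum_sq_sum_mul_eq, div_inv_eq_mul, Finset.sum_mul]
        refine Finset.sum_congr rfl fun R _ => ?_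
        rw [Finset.sum_mul]
        exact Finset.sum_congr rfl fun R' _ => by ring
    _ ≤ ∑ R, ∑ R', η R * η R' * (q : ℝ) ^ (R ∩ R').card := by
        gcongr with R _ R' _
        · exact mul_nonneg (hη0 R) (hη0 R')
        · simpa using
            card_pow_mul_sum_extendUniform_mul_le R R' (hφ R).1 (hφ R').1 (hφ R).2 (hφ R').2

end
end
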